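/- For all A, B ∈ M_n(ℂ), |tr(A*B)|² ≤ tr(|A||B|) · tr(|A*||B*|), and consequently |tr(A*B)| ≤ (tr(|A||B|) + tr(|A*||B*|))/2. -/

import Mathlib

open Matrix
open scoped ComplexOrder

/-- The positive semidefinite square root, as `Matrix.PosSemidef.sqrt` was defined in the
older Mathlib (removed since). -/
noncomputable def psdSqrt {k : Type*} [Fintype k] [DecidableEq k]
    {M : Matrix k k ℂ} (hM : M.PosSemidef) : Matrix k k ℂ :=
  (hM.1.eigenvectorUnitary : Matrix k k ℂ) *
    diagonal ((↑) ∘ (√·) ∘ hM.1.eigenvalues) * (star (hM.1.eigenvectorUnitary : Matrix k k ℂ))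

lemma posSemidef_psdSqrt {k : Type*} [Fintype k] [DecidableEq k]
    {M : Matrix k k ℂ} (hM : M.PosSemidef) : (psdSqrt hM).PosSemidef := by
  unfold psdSqrt
  have hd : (diagonal ((↑) ∘ (√·) ∘ hM.1.eigenvalues : k → ℂ)).PosSemidef := by
    refine Matrix.PosSemidef.diagonal (fun i => ?_)
    simp [Complex.le_def, Real.sqrt_nonneg]
  simpa [star_eq_conjTranspose] using
    hd.mul_mul_conjTranspose_same (hM.1.eigenvectorUnitary : Matrix k k ℂ)

/-- The usual modulus `|Z| = (Zᴴ Z)^(1/2)` (positive semidefinite square root). -/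
noncomputable def mAbs {k : Type*} [Fintype k] [DecidableEq k]
    (Z : Matrix k k ℂ) : Matrix k k ℂ :=
  psdSqrt (Matrix.posSemidef_conjTranspose_mul_self Z)

lemma mAbs_posSemidef {k : Type*} [Fintype k] [DecidableEq k]
    (Z : Matrix k k ℂ) : (mAbs Z).PosSemidef :=
  posSemidef_psdSqrt _

lemma psd_half_smul {k : Type*} [Fintype k] [DecidableEq k]
    {M : Matrix k k ℂ} (h : M.PosSemidef) :
    ((2:ℂ)⁻¹ • M).PosSemidef := by
  constructor
  · unfold Matrix.IsHermitian
    rw [conjTranspose_smul, h.1]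
    norm_num
  · intro x
    exact (h.smul (a := (2:ℂ)⁻¹) (by simp [Complex.le_def])).2 x

/-- The arithmetic symmetric modulus `(|Z| + |Z*|)/2`. -/
noncomputable def symMod {k : Type*} [Fintype k] [DecidableEq k]
    (Z : Matrix k k ℂ) : Matrix k k ℂ :=
  (2:ℂ)⁻¹ • (mAbs Z + mAbs Zᴴ)

lemma symMod_posSemidef {k : Type*} [Fintype k] [DecidableEq k]
    (Z : Matrix k k ℂ) : (symMod Z).PosSemidef :=
  psd_half_smul ((mAbs_posSemidef Z).add (mAbs_posSemidef Zᴴ))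

lemma qsym_arg_psd {k : Type*} [Fintype k] [DecidableEq k]
    (Z : Matrix k k ℂ) :
    ((2:ℂ)⁻¹ • (mAbs Z ^ 2 + mAbs Zᴴ ^ 2)).PosSemidef :=
  psd_half_smul (((mAbs_posSemidef Z).pow 2).add ((mAbs_posSemidef Zᴴ).pow 2))

/-- The quadratic symmetric modulus `((|Z|² + |Z*|²)/2)^(1/2)`. -/
noncomputable def qsymMod {k : Type*} [Fintype k] [DecidableEq k]
    (Z : Matrix k k ℂ) : Matrix k k ℂ :=
  psdSqrt (qsym_arg_psd Z)

lemma qsymMod_posSemidef {k : Type*} [Fintype k] [DecidableEq k]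
    (Z : Matrix k k ℂ) : (qsymMod Z).PosSemidef :=
  posSemidef_psdSqrt _

/-- The Schatten `p`-norm, as the `ℓ^p` norm of the singular values
(the eigenvalues of `|X|`). -/
noncomputable def schatten {k : Type*} [Fintype k] [DecidableEq k]
    (p : ℝ) (X : Matrix k k ℂ) : ℝ :=
  (∑ i, ((mAbs_posSemidef X).1.eigenvalues i) ^ p) ^ (1/p)

/-- The operator norm: the largest singular value. -/
noncomputable def opN {k : Type*} [Fintype k] [DecidableEq k]
    (X : Matrix k k ℂ) : ℝ :=
  ⨆ i, (mAbs_posSemidef X).1.eigenvalues i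

/-- The Frobenius (Schatten-2) norm. -/
noncomputable def frob {k : Type*} [Fintype k] [DecidableEq k]
    (X : Matrix k k ℂ) : ℝ :=
  Real.sqrt ((Xᴴ * X).trace.re)

/-!
Let `P = |A|^{1/2}` and `C = |A|^{-1/2} Aᴴ`, the inverse taken on the support of `|A|`, so that
`Aᴴ = P C` and `Cᴴ C = |Aᴴ|`; similarly `Bᴴ = Q D`. Then `tr(Aᴴ B) = tr((P Q)ᴴ (C Dᴴ))`, while
`tr((P Q)ᴴ (P Q)) = tr(|A| |B|)` and `tr((C Dᴴ)ᴴ (C Dᴴ)) = tr(|Aᴴ| |Bᴴ|)`, so the first inequality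
is Cauchy–Schwarz for the Frobenius inner product and the second is AM–GM.
-/

open scoped MatrixOrder

lemma le_add_div_two_of_sq_le_mul {t x y : ℝ} (h : t ^ 2 ≤ x * y) (hx : 0 ≤ x) (hy : 0 ≤ y) :
    t ≤ (x + y) / 2 :=
  (le_abs_self t).trans <|
    abs_le_of_sq_le_sq (h.trans (by nlinarith [sq_nonneg (x - y)])) (by positivity)

namespace Matrix

variable {n 𝕜 : Type*} [Fintype n] [RCLike 𝕜]

theorem re_trace_conjTranspose_mul_self_nonneg (X : Matrix n n 𝕜) :
    0 ≤ RCLike.re (Xᴴ * X).trace :=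
  (RCLike.nonneg_iff.mp (posSemidef_conjTranspose_mul_self X).trace_nonneg).1

variable [DecidableEq n]

theorem norm_trace_conjTranspose_mul_sq_le (X Y : Matrix n n 𝕜) :
    ‖(Xᴴ * Y).trace‖ ^ 2 ≤ RCLike.re (Xᴴ * X).trace * RCLike.re (Yᴴ * Y).trace := by
  let := toMatrixSeminormedAddCommGroup (1 : Matrix n n 𝕜) PosSemidef.one
  let := toMatrixInnerProductSpace (1 : Matrix n n 𝕜) PosSemidef.one
  have h : ‖(Y * 1 * Xᴴ).trace‖ * ‖(X * 1 * Yᴴ).trace‖ ≤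
      RCLike.re (X * 1 * Xᴴ).trace * RCLike.re (Y * 1 * Yᴴ).trace :=
    inner_mul_inner_self_le (𝕜 := 𝕜) X Y
  have hc : (Yᴴ * X).trace = star (Xᴴ * Y).trace := by
    rw [← trace_conjTranspose, conjTranspose_mul, conjTranspose_conjTranspose]
  simp only [mul_one] at h
  rwa [trace_mul_comm X Xᴴ, trace_mul_comm Y Yᴴ, trace_mul_comm Y Xᴴ, trace_mul_comm X Yᴴ, hc,
    norm_star, ← sq] at h

lemma continuousOn_spectrum (a : Matrix n n 𝕜) (f : ℝ → ℝ) : ContinuousOn f (spectrum ℝ a) :=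
  a.finite_real_spectrum.continuousOn f

lemma isHermitian_cfc (f : ℝ → ℝ) (a : Matrix n n 𝕜) : (cfc f a).IsHermitian :=
  cfc_predicate f a

theorem mul_cfc_conjTranspose_mul_self_eq_self (A : Matrix n n 𝕜) {f : ℝ → ℝ}
    (hf : ∀ x ∈ spectrum ℝ (Aᴴ * A), x ≠ 0 → f x = 1) : A * cfc f (Aᴴ * A) = A := by
  set a := Aᴴ * A
  have ha : IsSelfAdjoint a := IsSelfAdjoint.star_mul_self A
  have hc := continuousOn_spectrum a
  set g : ℝ → ℝ := fun x => f x - 1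
  have hg : (A * cfc g a)ᴴ * (A * cfc g a) = 0 := calc
    (A * cfc g a)ᴴ * (A * cfc g a) = cfc g a * a * cfc g a := by
          simp only [conjTranspose_mul, (isHermitian_cfc g a).eq, a, Matrix.mul_assoc]
    _ = cfc (fun x => g x * x * g x) a := by
          rw [cfc_mul _ _ a (hc _) (hc _), cfc_mul _ _ a (hc _) (hc _), cfc_id' ℝ a]
    _ = cfc (fun _ => 0) a := cfc_congr fun x hx => by
          by_cases h0 : x = 0
          · simp [h0]
          · simp [g, hf x hx h0]
    _ = 0 := cfc_const_zero ℝ a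
  rwa [conjTranspose_mul_self_eq_zero, cfc_sub _ _ a (hc _) (hc _), cfc_const_one ℝ a,
    Matrix.mul_sub, mul_one, sub_eq_zero] at hg

theorem exists_conjTranspose_eq_mul (A : Matrix n n 𝕜) :
    ∃ P C : Matrix n n 𝕜, P.IsHermitian ∧ P * P = CFC.abs A ∧ Aᴴ = P * C ∧
      Cᴴ * C = CFC.abs Aᴴ := by
  set a := Aᴴ * A
  have ha : 0 ≤ a := star_mul_self_nonneg A
  have hc := continuousOn_spectrum a
  set p : ℝ → ℝ := fun x => √√x
  -- `0⁻¹ = 0` makes `e` the inverse of `p` on the support only.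
  set e : ℝ → ℝ := fun x => (√√x)⁻¹
  have hp4 : ∀ x, 0 ≤ x → p x * p x * (p x * p x) = x := fun x hx => by
    simp only [p]
    rw [Real.mul_self_sqrt (Real.sqrt_nonneg x), Real.mul_self_sqrt hx]
  have hpos : ∀ x ∈ spectrum ℝ a, x ≠ 0 → 0 < p x := fun x hx h0 =>
    Real.sqrt_pos.mpr (Real.sqrt_pos.mpr ((spectrum_nonneg_of_nonneg ha hx).lt_of_ne' h0))
  have hpe : A * cfc (fun x => p x * e x) a = A :=
    mul_cfc_conjTranspose_mul_self_eq_self A fun x hx h0 =>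
      mul_inv_cancel₀ (hpos x hx h0).ne'
  have hee : A * cfc (fun x => e x * e x * x * (e x * e x)) a = A :=
    mul_cfc_conjTranspose_mul_self_eq_self A fun x hx h0 => by
      have := (hpos x hx h0).ne'
      show (p x)⁻¹ * (p x)⁻¹ * x * ((p x)⁻¹ * (p x)⁻¹) = 1
      nth_rewrite 3 [← hp4 x (spectrum_nonneg_of_nonneg ha hx)]
      field_simp
  refine ⟨cfc p a, cfc e a * Aᴴ, isHermitian_cfc p a, ?_, ?_, ?_⟩
  · rw [← cfc_mul _ _ a (hc _) (hc _), CFC.abs, star_eq_conjTranspose, eq_comm,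
      CFC.sqrt_eq_iff _ _ ha (cfc_nonneg fun x _ => mul_self_nonneg _),
      ← cfc_mul _ _ a (hc _) (hc _)]
    conv_rhs => rw [← cfc_id' ℝ a]
    exact cfc_congr fun x hx => hp4 x (spectrum_nonneg_of_nonneg ha hx)
  · rw [← Matrix.mul_assoc, ← cfc_mul _ _ a (hc _) (hc _)]
    simpa [(isHermitian_cfc _ a).eq] using congrArg conjTranspose hpe.symm
  · rw [CFC.abs, star_eq_conjTranspose, conjTranspose_conjTranspose, eq_comm]
    refine (CFC.sqrt_eq_iff _ _ (posSemidef_self_mul_conjTranspose A).nonneg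
      (star_mul_self_nonneg (cfc e a * Aᴴ))).mpr ?_
    calc _ = A * cfc (fun x => e x * e x * x * (e x * e x)) a * Aᴴ := by
          simp only [cfc_mul _ _ a (hc _) (hc _), cfc_id' ℝ a, star_eq_conjTranspose,
            conjTranspose_mul, (isHermitian_cfc e a).eq, conjTranspose_conjTranspose, a,
            Matrix.mul_assoc]
      _ = A * Aᴴ := by rw [hee]

theorem exists_trace_conjTranspose_mul_eq_of_cfcAbs (A B : Matrix n n 𝕜) :
    ∃ X Y : Matrix n n 𝕜, (Aᴴ * B).trace = (Xᴴ * Y).trace ∧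
      (Xᴴ * X).trace = (CFC.abs A * CFC.abs B).trace ∧
      (Yᴴ * Y).trace = (CFC.abs Aᴴ * CFC.abs Bᴴ).trace := by
  obtain ⟨P, C, hP, hPP, hAP, hCC⟩ := exists_conjTranspose_eq_mul A
  obtain ⟨Q, D, hQ, hQQ, hBQ, hDD⟩ := exists_conjTranspose_eq_mul B
  refine ⟨P * Q, C * Dᴴ, ?_, ?_, ?_⟩
  · rw [hAP, ← conjTranspose_conjTranspose B, hBQ]
    simp only [conjTranspose_mul, hP.eq, hQ.eq, Matrix.mul_assoc]
    rw [trace_mul_comm Q]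
    simp only [Matrix.mul_assoc]
  · rw [← hPP, ← hQQ, conjTranspose_mul, hP.eq, hQ.eq, Matrix.mul_assoc, trace_mul_comm]
    simp only [Matrix.mul_assoc]
  · rw [← hCC, ← hDD, conjTranspose_mul, conjTranspose_conjTranspose, Matrix.mul_assoc,
      trace_mul_comm]
    simp only [Matrix.mul_assoc]

end Matrix

theorem psdSqrt_eq_cfcSqrt {k : Type*} [Fintype k] [DecidableEq k]
    {M : Matrix k k ℂ} (hM : M.PosSemidef) : psdSqrt hM = CFC.sqrt M := by
  rw [CFC.sqrt_eq_cfc, cfc_nnreal_eq_real _ M, hM.1.cfc_eq]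
  unfold psdSqrt IsHermitian.cfc
  simp [Function.comp_def, Real.coe_toNNReal', star_eq_conjTranspose,
    max_eq_left (hM.eigenvalues_nonneg _)]

theorem mAbs_eq_cfcAbs {k : Type*} [Fintype k] [DecidableEq k] (Z : Matrix k k ℂ) :
    mAbs Z = CFC.abs Z := by
  rw [mAbs, psdSqrt_eq_cfcSqrt, CFC.abs, star_eq_conjTranspose]

/-- `|tr(A*B)|² ≤ tr(|A||B|) · tr(|A*||B*|)`, and consequently
`|tr(A*B)| ≤ (tr(|A||B|) + tr(|A*||B*|))/2`. -/
theorem stmt8 (n : ℕ) (A B : Matrix (Fin n) (Fin n) ℂ) :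
    ‖(Aᴴ * B).trace‖ ^ 2 ≤
      ((mAbs A * mAbs B).trace).re * ((mAbs Aᴴ * mAbs Bᴴ).trace).re ∧
    ‖(Aᴴ * B).trace‖ ≤
      (((mAbs A * mAbs B).trace).re + ((mAbs Aᴴ * mAbs Bᴴ).trace).re) / 2 := by
  obtain ⟨X, Y, hAB, hX, hY⟩ := exists_trace_conjTranspose_mul_eq_of_cfcAbs A B
  simp only [mAbs_eq_cfcAbs, hAB, ← hX, ← hY, ← RCLike.re_to_complex]
  have hCS := norm_trace_conjTranspose_mul_sq_le X Y
  exact ⟨hCS, le_add_div_two_of_sq_le_mul hCS (re_trace_conjTranspose_mul_self_nonneg X)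
    (re_trace_conjTranspose_mul_self_nonneg Y)⟩
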